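/- arXiv:1903.10746 — 2 statements merged into one kernel-verified Lean document; each statement's English description precedes it below -/
import Mathlib

section
/- Soundness of the Decomposition algorithm: Let R be a box in ℝⁿ, U a finite set of controls, and P : Set ℝⁿ → U → Prop a monotone predicate (if S ⊆ S' and P S' u then P S u), where P T u means 'the overapproximated post-image of T under control u, after reset, is contained in R'. Define recursively: Decomposition(T, D) succeeds if either some u ∈ U satisfies P T u, or D > 0 and Decomposition succeeds with depth D-1 on both halves of a bisection of T. If Decomposition(R, D) succeeds, then there exists a finite family {(T_i, u_i)}_{i∈I} with ⋃_i T_i = R and P T_i u_i for every i. -/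
/-- The axis-aligned box `[a₁,b₁] × ⋯ × [aₙ,bₙ]`. -/
def Box {n : ℕ} (a b : Fin n → ℝ) : Set (Fin n → ℝ) :=
  Set.univ.pi fun i => Set.Icc (a i) (b i)

/-- Success predicate of the recursive `Decomposition` procedure: either some control
in `U` works uniformly on the box, or the depth is positive and the procedure succeeds
with decremented depth on both halves of a bisection of the box. -/
inductive DecompSucceeds {n : ℕ} {C : Type*} (U : Finset C)
    (P : Set (Fin n → ℝ) → C → Prop) : (Fin n → ℝ) → (Fin n → ℝ) → ℕ → Prop
  | base (a b : Fin n → ℝ) (D : ℕ) (u : C) (hu : u ∈ U) (h : P (Box a b) u) :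
      DecompSucceeds U P a b D
  | bisect (a b : Fin n → ℝ) (D : ℕ) (j : Fin n)
      (h₁ : DecompSucceeds U P a (Function.update b j ((a j + b j) / 2)) D)
      (h₂ : DecompSucceeds U P (Function.update a j ((a j + b j) / 2)) b D) :
      DecompSucceeds U P a b (D + 1)

lemma box_bisect {n : ℕ} (a b : Fin n → ℝ) (j : Fin n) :
    Box a (Function.update b j ((a j + b j) / 2)) ∪
      Box (Function.update a j ((a j + b j) / 2)) b = Box a b := by
  set m := (a j + b j) / 2 with hm
  ext x
  simp only [Box, Set.mem_union, Set.mem_pi, Set.mem_univ, true_implies, Set.mem_Icc]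
  constructor
  · rintro (h | h) i
    · rcases h i with ⟨h1, h2⟩
      refine ⟨h1, ?_⟩
      by_cases hij : i = j
      · subst hij
        rw [Function.update_self] at h2
        have : a i ≤ b i := by
          by_contra hc; push_neg at hc
          have : m < a i := by rw [hm]; linarith
          linarith
        linarith [h2, show m ≤ b i by rw [hm]; linarith]
      · rw [Function.update_of_ne hij] at h2; exact h2
    · rcases h i with ⟨h1, h2⟩
      refine ⟨?_, h2⟩
      by_cases hij : i = j
      · subst hij
        rw [Function.update_self] at h1
        have : a i ≤ b i := by
          by_contra hc; push_neg at hc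
          have : b i < m := by rw [hm]; linarith
          linarith
        linarith [h1, show a i ≤ m by rw [hm]; linarith]
      · rw [Function.update_of_ne hij] at h1; exact h1
  · intro h
    by_cases hx : x j ≤ m
    · left
      intro i
      rcases h i with ⟨h1, h2⟩
      refine ⟨h1, ?_⟩
      by_cases hij : i = j
      · subst hij; rw [Function.update_self]; exact hx
      · rw [Function.update_of_ne hij]; exact h2
    · right
      push_neg at hx
      intro i
      rcases h i with ⟨h1, h2⟩
      refine ⟨?_, h2⟩
      by_cases hij : i = j
      · subst hij; rw [Function.update_self]; exact hx.le
      · rw [Function.update_of_ne hij]; exact h1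

theorem decomposition_sound {n : ℕ} {C : Type*} (U : Finset C)
    (P : Set (Fin n → ℝ) → C → Prop)
    (hmono : ∀ (S S' : Set (Fin n → ℝ)) (u : C), S ⊆ S' → P S' u → P S u)
    (a b : Fin n → ℝ) (D : ℕ)
    (hsucc : DecompSucceeds U P a b D) :
    ∃ (I : Type) (_ : Fintype I) (T : I → Set (Fin n → ℝ)) (u : I → C),
      (⋃ i, T i) = Box a b ∧ ∀ i, u i ∈ U ∧ P (T i) (u i) := by
  induction hsucc with
  | base a b D u hu h =>
      exact ⟨PUnit, inferInstance, fun _ => Box a b, fun _ => u, Set.iUnion_const _,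
        fun _ => ⟨hu, h⟩⟩
  | bisect a b D j h₁ h₂ ih₁ ih₂ =>
      obtain ⟨I₁, hI₁, T₁, u₁, hT₁, hP₁⟩ := ih₁
      obtain ⟨I₂, hI₂, T₂, u₂, hT₂, hP₂⟩ := ih₂
      refine ⟨I₁ ⊕ I₂, inferInstance, Sum.elim T₁ T₂, Sum.elim u₁ u₂, ?_, ?_⟩
      · rw [Set.iUnion_sum]
        simp only [Sum.elim_inl, Sum.elim_inr, hT₁, hT₂]
        exact box_bisect a b j
      · rintro (i | i)
        · exact hP₁ i
        · exact hP₂ i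
end

section
/- Sound overapproximation of the perturbed linear flow: consider ẋ = Ax + b + Hd(t) in ℝⁿ with ‖d(t)‖ ≤ δ for all t. Then for any initial set T, the reachable set at time h satisfies Reach_h(T) ⊆ e^{Ah}T + {∫₀ʰ e^{A(h−s)} b ds} + B(0, ρ), where ρ = δ‖H‖ ∫₀ʰ ‖e^{A(h−s)}‖ ds, with + denoting Minkowski sum and B(0,ρ) the closed ball of radius ρ. -/
/-! Duhamel's formula: `g t = e^{(h-t)A} x(t) - ∫₀ᵗ e^{(h-s)A} b ds` has derivative
`e^{(h-t)A} (H d(t))`, so `x(h)` differs from the unperturbed affine flow of `x(0)`, which is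
`g 0 + ∫₀ʰ e^{(h-s)A} b ds`, by `g h - g 0`, whose norm is at most
`∫₀ʰ ‖e^{(h-s)A}‖ ‖H‖ δ ds` by the integral form of the mean value inequality. -/

open scoped Pointwise

open NormedSpace Set Metric

section ExpFlow

variable {𝔸 : Type*} [NormedRing 𝔸] [NormedAlgebra ℝ 𝔸] [CompleteSpace 𝔸]

theorem hasDerivAt_exp_sub_smul (a : 𝔸) (h t : ℝ) :
    HasDerivAt (fun s : ℝ => exp ((h - s) • a)) (-(exp ((h - t) • a) * a)) t := by
  simpa [Function.comp_def] using
    (hasDerivAt_exp_smul_const a (h - t)).scomp t ((hasDerivAt_id t).const_sub h)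

theorem continuous_exp_sub_smul (a : 𝔸) (h : ℝ) : Continuous fun s : ℝ => exp ((h - s) • a) :=
  continuous_iff_continuousAt.2 fun t => (hasDerivAt_exp_sub_smul a h t).continuousAt

variable {E : Type*} [NormedAddCommGroup E] [NormedSpace ℝ E] [CompleteSpace E]

noncomputable def affineFlow (A : E →L[ℝ] E) (b : E) (h : ℝ) (y : E) : E :=
  exp (h • A) y + ∫ s in (0 : ℝ)..h, exp ((h - s) • A) b

theorem hasDerivAt_exp_sub_smul_apply_sub_integral {A : E →L[ℝ] E} {b : E} {x f : ℝ → E}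
    (h : ℝ) {t : ℝ} (hx : HasDerivAt x (A (x t) + b + f t) t) :
    HasDerivAt (fun u => exp ((h - u) • A) (x u) - ∫ s in (0 : ℝ)..u, exp ((h - s) • A) b)
      (exp ((h - t) • A) (f t)) t := by
  have hint : HasDerivAt (fun u => ∫ s in (0 : ℝ)..u, exp ((h - s) • A) b)
      (exp ((h - t) • A) b) t :=
    (((continuous_exp_sub_smul A h).clm_apply continuous_const).integral_hasStrictDerivAt
      0 t).hasDerivAt
  refine (((hasDerivAt_exp_sub_smul A h t).clm_apply hx).sub hint).congr_deriv ?_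
  simp only [neg_apply, mul_apply_eq_comp, map_add]
  abel

theorem norm_sub_affineFlow_le {A : E →L[ℝ] E} {b : E} {x f : ℝ → E} {h C : ℝ} (hh : 0 ≤ h)
    (hx : ∀ t, HasDerivAt x (A (x t) + b + f t) t) (hf : ∀ t, ‖f t‖ ≤ C) :
    ‖x h - affineFlow A b h (x 0)‖ ≤ C * ∫ s in (0 : ℝ)..h, ‖exp ((h - s) • A)‖ := by
  set g := fun u => exp ((h - u) • A) (x u) - ∫ s in (0 : ℝ)..u, exp ((h - s) • A) b
  have hg : ∀ t, HasDerivAt g (exp ((h - t) • A) (f t)) t := fun t =>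
    hasDerivAt_exp_sub_smul_apply_sub_integral h (hx t)
  have hdisplacement : x h - affineFlow A b h (x 0) = g h - g 0 := by
    simp only [g, affineFlow, sub_self, zero_smul, exp_zero, one_apply_eq_self, sub_zero,
      intervalIntegral.integral_same]
    abel
  rw [hdisplacement, ← intervalIntegral.integral_const_mul]
  refine norm_sub_le_integral_of_norm_deriv_le_of_le hh
    (fun t _ => (hg t).continuousAt.continuousWithinAt)
    (fun t _ => (hg t).differentiableAt.differentiableWithinAt) (.of_forall fun t _ => ?_)
    ((continuous_const.mul (continuous_exp_sub_smul A h).norm).intervalIntegrable 0 h)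
  rw [(hg t).deriv, mul_comm]
  exact (exp ((h - t) • A)).le_opNorm_of_le (hf t)

end ExpFlow

theorem perturbed_linear_flow_overapprox_general {n : ℕ}
    (A H : EuclideanSpace ℝ (Fin n) →L[ℝ] EuclideanSpace ℝ (Fin n))
    (b : EuclideanSpace ℝ (Fin n)) (δ h : ℝ) (hh : 0 ≤ h)
    (T : Set (EuclideanSpace ℝ (Fin n)))
    (x d : ℝ → EuclideanSpace ℝ (Fin n))
    (hx0 : x 0 ∈ T)
    (hd : ∀ t, ‖d t‖ ≤ δ)
    (hode : ∀ t, HasDerivAt x (A (x t) + b + H (d t)) t) :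
    x h ∈
      ((fun y => NormedSpace.exp (h • A) y +
          ∫ s in (0 : ℝ)..h, NormedSpace.exp ((h - s) • A) b) '' T) +
        Metric.closedBall 0 (δ * ‖H‖ * ∫ s in (0 : ℝ)..h, ‖NormedSpace.exp ((h - s) • A)‖) := by
  have hHd : ∀ t, ‖H (d t)‖ ≤ δ * ‖H‖ := fun t => by
    rw [mul_comm]
    exact H.le_opNorm_of_le (hd t)
  refine ⟨affineFlow A b h (x 0), mem_image_of_mem _ hx0, x h - affineFlow A b h (x 0), ?_,
    add_sub_cancel _ _⟩
  rw [mem_closedBall, dist_zero_right]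
  exact norm_sub_affineFlow_le hh hode hHd

theorem perturbed_linear_flow_overapprox {n : ℕ}
    (A H : EuclideanSpace ℝ (Fin n) →L[ℝ] EuclideanSpace ℝ (Fin n))
    (b : EuclideanSpace ℝ (Fin n)) (δ h : ℝ) (hδ : 0 ≤ δ) (hh : 0 ≤ h)
    (T : Set (EuclideanSpace ℝ (Fin n)))
    (x d : ℝ → EuclideanSpace ℝ (Fin n))
    (hx0 : x 0 ∈ T)
    (hd : ∀ t, ‖d t‖ ≤ δ)
    (hode : ∀ t, HasDerivAt x (A (x t) + b + H (d t)) t) :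
    x h ∈
      ((fun y => NormedSpace.exp (h • A) y +
          ∫ s in (0 : ℝ)..h, NormedSpace.exp ((h - s) • A) b) '' T) +
        Metric.closedBall 0 (δ * ‖H‖ * ∫ s in (0 : ℝ)..h, ‖NormedSpace.exp ((h - s) • A)‖) :=
  perturbed_linear_flow_overapprox_general A H b δ h hh T x d hx0 hd hode
end
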